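/- arXiv:2007.13846 — 7 statements merged into one kernel-verified Lean document; each statement's English description precedes it below -/
import Mathlib

section
/- Let σ = ⟨v₁,…,v_k⟩ be a strictly convex finitely generated cone in a lattice N. Then every small vector of σ is a sum of finitely many minimal vectors of σ; that is, every small vector lies in the additive submonoid of N generated by the minimal vectors of σ. -/
universe u

/-- The cone of all nonnegative rational combinations of a finite family of vectors. -/
def coneSpan {V : Type u} [AddCommGroup V] [Module ℚ V] {k : ℕ} (v : Fin k → V) : Set V :=
  {x | ∃ c : Fin k → ℚ, (∀ i, 0 ≤ c i) ∧ x = ∑ i, c i • v i}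

/-- A finitely generated cone is strictly convex if it contains no line,
i.e. `σ ∩ (−σ) = {0}`. -/
def StrictlyConvexCone {V : Type u} [AddCommGroup V] [Module ℚ V] {k : ℕ}
    (v : Fin k → V) : Prop :=
  ∀ x ∈ coneSpan v, -x ∈ coneSpan v → x = 0

/-- `w` is a primitive vector of the lattice `N`: a nonzero element of `N` generating the
monoid `ℚ≥0·w ∩ N`. -/
def IsPrimitive {V : Type u} [AddCommGroup V] [Module ℚ V] (N : Submodule ℤ V)
    (w : V) : Prop :=
  w ∈ N ∧ w ≠ 0 ∧ ∀ x ∈ N, (∃ c : ℚ, 0 ≤ c ∧ x = c • w) → ∃ m : ℕ, x = (m : ℤ) • w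

/-- `v` lists the vertices of the cone it spans: all entries are primitive and the number of
generators is minimal among generating families of the same cone. -/
def IsVertexFamily {V : Type u} [AddCommGroup V] [Module ℚ V] (N : Submodule ℤ V) {k : ℕ}
    (v : Fin k → V) : Prop :=
  (∀ i, IsPrimitive N (v i)) ∧
    ∀ (m : ℕ) (w : Fin m → V), coneSpan w = coneSpan v → k ≤ m

/-- The lattice `N_σ = N ∩ span_ℚ σ` of the cone spanned by `v`. -/
def latticeOf {V : Type u} [AddCommGroup V] [Module ℚ V] (N : Submodule ℤ V) {k : ℕ}
    (v : Fin k → V) : Submodule ℤ V :=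
  N ⊓ (Submodule.span ℚ (Set.range v)).restrictScalars ℤ

/-- The lattice `N ∩ span_ℚ S` of a subset `S`. -/
def latticeOfSet {V : Type u} [AddCommGroup V] [Module ℚ V] (N : Submodule ℤ V)
    (S : Set V) : Submodule ℤ V :=
  N ⊓ (Submodule.span ℚ S).restrictScalars ℤ

/-- A minimal vector of the cone spanned by `v`: a nonzero integral vector of the cone which
is not a vertex and cannot be written as a sum of two nonzero integral vectors of the cone. -/
def IsMinimalVec {V : Type u} [AddCommGroup V] [Module ℚ V] (N : Submodule ℤ V) {k : ℕ}
    (v : Fin k → V) (x : V) : Prop :=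
  x ∈ coneSpan v ∧ x ∈ N ∧ x ≠ 0 ∧ (∀ i, x ≠ v i) ∧
    ¬ ∃ y z : V, y ∈ coneSpan v ∧ y ∈ N ∧ y ≠ 0 ∧
      z ∈ coneSpan v ∧ z ∈ N ∧ z ≠ 0 ∧ x = y + z

/-- A small vector of the cone spanned by `v`: a nonzero integral vector of the cone which
cannot be written as a vertex plus an integral vector of the cone. -/
def IsSmallVec {V : Type u} [AddCommGroup V] [Module ℚ V] (N : Submodule ℤ V) {k : ℕ}
    (v : Fin k → V) (x : V) : Prop :=
  x ∈ coneSpan v ∧ x ∈ N ∧ x ≠ 0 ∧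
    ∀ i, ¬ ∃ y : V, y ∈ coneSpan v ∧ y ∈ N ∧ x = v i + y

/-- A cone is regular if its generators form part of a `ℤ`-basis of the lattice `N`. -/
def IsRegularCone {V : Type u} [AddCommGroup V] [Module ℚ V] (N : Submodule ℤ V) {k : ℕ}
    (v : Fin k → V) : Prop :=
  ∃ (ι : Type u) (b : Module.Basis ι ℤ ↥N) (f : Fin k → ι),
    Function.Injective f ∧ ∀ i, (b (f i) : V) = v i

/-- The determinant of a simplicial cone, computed with respect to a `ℤ`-basis of its
lattice `N_σ`. -/
noncomputable def coneDet {V : Type u} [AddCommGroup V] [Module ℚ V] (N : Submodule ℤ V) {k : ℕ}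
    (v : Fin k → V) (hv : ∀ i, v i ∈ latticeOf N v)
    (b : Module.Basis (Fin k) ℤ ↥(latticeOf N v)) : ℤ :=
  (Matrix.of fun i j => b.repr ⟨v j, hv j⟩ i).det

/-- `F` is a face of the cone `σ` (both given as subsets): the vanishing locus on `σ` of a
`ℚ`-linear functional which is nonnegative on `σ`. -/
def IsFaceOf {V : Type u} [AddCommGroup V] [Module ℚ V] (σ F : Set V) : Prop :=
  ∃ φ : V →ₗ[ℚ] ℚ, (∀ x ∈ σ, 0 ≤ φ x) ∧ F = {x | x ∈ σ ∧ φ x = 0}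

/-- `v₁, …, v_k` are `ℚ`-linearly independent from `w₁, …, w_s`. -/
def RelSimplicial {V : Type u} [AddCommGroup V] [Module ℚ V] {k s : ℕ}
    (v : Fin k → V) (w : Fin s → V) : Prop :=
  ∀ (c : Fin k → ℚ) (d : Fin s → ℚ),
    (∑ i, c i • v i) + ∑ j, d j • w j = 0 → ∀ i, c i = 0

/-- A cone (given as a subset, with its lattice) is irreducible if it admits no direct sum
decomposition `F = F₁ ⊕ ρ₁` in which `ρ₁` is a regular cone of positive dimension. -/
def IsIrreducibleCone {V : Type u} [AddCommGroup V] [Module ℚ V] (N : Submodule ℤ V)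
    (F : Set V) : Prop :=
  ¬ ∃ (m l : ℕ) (t : Fin m → V) (r : Fin l → V), 0 < l ∧
      IsRegularCone N r ∧
      F = coneSpan (Fin.append t r) ∧
      latticeOfSet N F = latticeOf N t ⊔ latticeOf N r ∧
      Disjoint (latticeOf N t) (latticeOf N r)

/-!
Strict convexity makes the vertices positively independent, so by Gordan's theorem some linear
functional is positive on all of them, hence on every nonzero point of `σ`. Rescaled by a common
denominator of its values on generators of `N`, it takes integer values on `N`, so it is `≥ 1` on
the nonzero lattice points of `σ`. A small vector which is not minimal splits into two nonzero
lattice points of `σ`, both again small and of smaller value under this functional, so induction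
on that value concludes.
-/

section Gordan

variable {K : Type*} [Field K] [LinearOrder K] [IsStrictOrderedRing K]

lemma exists_forall_pos_mul_add {ι : Type*} [Finite ι] {a : ι → K} (ha : ∀ i, 0 < a i)
    (b : ι → K) : ∃ t : K, ∀ i, 0 < t * a i + b i :=
  (Filter.eventually_all.2 fun i => (Filter.tendsto_atTop_add_const_right _ (b i)
    (Filter.tendsto_id.atTop_mul_const (ha i))).eventually_gt_atTop 0).exists

/-- Gordan's theorem. In the inductive step, either the images of `v 1, …, v k` modulo `v 0` stay
positively independent, and a functional positive on them, tilted by one which is `1` at `v 0`,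
works; or a nonnegative relation among them modulo `v 0` forces the functional obtained for
`v 1, …, v k` to be positive at `v 0` as well. -/
theorem Module.exists_dual_forall_apply_pos {V : Type*} [AddCommGroup V] [Module K V] {k : ℕ}
    (v : Fin k → V) (hv : ∀ c : Fin k → K, (∀ i, 0 ≤ c i) → ∑ i, c i • v i = 0 → c = 0) :
    ∃ φ : Module.Dual K V, ∀ i, 0 < φ (v i) := by
  induction k generalizing V with
  | zero => exact ⟨0, fun i => i.elim0⟩
  | succ k ih =>
    obtain ⟨φ, hφ⟩ := ih (fun i => v i.succ) fun c hc hsum =>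
      congrArg Fin.tail <| hv (Fin.cons 0 c) (Fin.cases le_rfl hc)
        (by simpa [Fin.sum_univ_succ] using hsum)
    have hv0 : v 0 ≠ 0 := fun h0 => by
      have := hv (Pi.single 0 1) (Pi.single_nonneg.2 zero_le_one) (by simp [h0])
      simpa using congrFun this 0
    let q := (K ∙ v 0).mkQ
    by_cases hq : ∀ c : Fin k → K, (∀ i, 0 ≤ c i) → ∑ i, c i • q (v i.succ) = 0 → c = 0
    · obtain ⟨ψ, hψ⟩ := ih (fun i => q (v i.succ)) hq
      obtain ⟨χ, hχ⟩ := Projective.exists_dual_eq_one K hv0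
      obtain ⟨t, ht⟩ := exists_forall_pos_mul_add hψ fun i => χ (v i.succ)
      have hq0 : q (v 0) = 0 :=
        (Submodule.Quotient.mk_eq_zero _).2 (Submodule.mem_span_singleton_self _)
      refine ⟨t • ψ.comp q + χ, Fin.cases ?_ fun i => by simpa using ht i⟩
      simp [hq0, hχ]
    · push Not at hq
      obtain ⟨c, hc, hsum, hne⟩ := hq
      obtain ⟨a, ha⟩ : ∃ a : K, a • v 0 = ∑ i, c i • v i.succ := by
        refine Submodule.mem_span_singleton.1 ((Submodule.Quotient.mk_eq_zero _).1 ?_)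
        change q _ = 0
        rw [map_sum]
        simpa only [map_smul] using hsum
      have hsum_pos : 0 < ∑ i, c i * φ (v i.succ) := by
        obtain ⟨i, hi⟩ := Function.ne_iff.1 hne
        exact Finset.sum_pos' (fun j _ => mul_nonneg (hc j) (hφ j).le)
          ⟨i, Finset.mem_univ i, mul_pos ((hc i).lt_of_ne' hi) (hφ i)⟩
      have ha_pos : 0 < a := by
        by_contra! ha_nonpos
        exact hne <| congrArg Fin.tail <| hv (Fin.cons (-a) c)
          (Fin.cases (neg_nonneg.2 ha_nonpos) hc) (by simp [Fin.sum_univ_succ, ← ha])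
      have hφ0 : a * φ (v 0) = ∑ i, c i * φ (v i.succ) := by
        rw [← smul_eq_mul, ← map_smul, ha, map_sum]
        simp only [map_smul, smul_eq_mul]
      exact ⟨φ, Fin.cases (pos_of_mul_pos_right (hφ0 ▸ hsum_pos) ha_pos.le) hφ⟩

end Gordan

lemma exists_nat_mul_apply_eq_intCast {V : Type*} [AddCommGroup V] [Module ℚ V]
    (N : Submodule ℤ V) [Module.Finite ℤ N] (φ : Module.Dual ℚ V) :
    ∃ d : ℕ, 0 < d ∧ ∀ y ∈ N, ∃ z : ℤ, (d : ℚ) * φ y = z := by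
  obtain ⟨s, hs⟩ := Module.Finite.iff_fg.1 ‹Module.Finite ℤ N›
  set d := ∏ x ∈ s, (φ x).den
  refine ⟨d, Finset.prod_pos fun x _ => (φ x).den_pos, fun y hy => ?_⟩
  have hN : N ≤ (LinearMap.range (Algebra.linearMap ℤ ℚ)).comap
      (((d : ℚ) • φ).restrictScalars ℤ) := by
    rw [← hs, Submodule.span_le]
    intro x hx
    obtain ⟨m, hm⟩ := Finset.dvd_prod_of_mem (fun x => (φ x).den) hx
    refine ⟨(φ x).num * m, ?_⟩
    simp only [Algebra.linearMap_apply, LinearMap.restrictScalars_apply, LinearMap.smul_apply,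
      smul_eq_mul, d, hm]
    push_cast
    linear_combination (-(m : ℚ)) * Rat.mul_den_eq_num (φ x)
  obtain ⟨z, hz⟩ := hN hy
  exact ⟨z, hz.symm⟩

section Cone

variable {V : Type u} [AddCommGroup V] [Module ℚ V] {k : ℕ} {v : Fin k → V}

lemma zero_mem_coneSpan : (0 : V) ∈ coneSpan v :=
  ⟨0, fun _ => le_rfl, by simp⟩

lemma add_mem_coneSpan {x y : V} (hx : x ∈ coneSpan v) (hy : y ∈ coneSpan v) :
    x + y ∈ coneSpan v := by
  obtain ⟨c, hc, rfl⟩ := hx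
  obtain ⟨c', hc', rfl⟩ := hy
  exact ⟨c + c', fun i => add_nonneg (hc i) (hc' i), by
    simp only [Pi.add_apply, add_smul, Finset.sum_add_distrib]⟩

lemma apply_pos_of_mem_coneSpan {φ : Module.Dual ℚ V} (hφ : ∀ i, 0 < φ (v i)) {y : V}
    (hy : y ∈ coneSpan v) (hy0 : y ≠ 0) : 0 < φ y := by
  obtain ⟨c, hc, rfl⟩ := hy
  have hterm : ∀ i ∈ Finset.univ, 0 ≤ c i * φ (v i) :=
    fun i _ => mul_nonneg (hc i) (hφ i).le
  simp only [map_sum, map_smul, smul_eq_mul]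
  refine (Finset.sum_nonneg hterm).lt_of_ne fun h => hy0 (Finset.sum_eq_zero fun i hi => ?_)
  have hci := (Finset.sum_eq_zero_iff_of_nonneg hterm).1 h.symm i hi
  rw [(mul_eq_zero.1 hci).resolve_right (hφ i).ne', zero_smul]

lemma StrictlyConvexCone.eq_zero_of_sum_smul_eq_zero (hsc : StrictlyConvexCone v)
    (hv : ∀ i, v i ≠ 0) (c : Fin k → ℚ) (hc : ∀ i, 0 ≤ c i) (hsum : ∑ i, c i • v i = 0) :
    c = 0 := by
  funext j
  have hj : c j • v j ∈ coneSpan v :=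
    ⟨Pi.single j (c j), Pi.single_nonneg.2 (hc j), by simp [Pi.single_apply, ite_smul]⟩
  have hj' : -(c j • v j) ∈ coneSpan v := by
    refine ⟨c - Pi.single j (c j), fun i => ?_, ?_⟩
    · rcases eq_or_ne i j with rfl | h <;> simp [*]
    · simp [sub_smul, Finset.sum_sub_distrib, hsum, Pi.single_apply, ite_smul]
  exact (smul_eq_zero.1 (hsc _ hj hj')).resolve_right (hv j)

theorem StrictlyConvexCone.exists_dual_one_le (hsc : StrictlyConvexCone v) (hv : ∀ i, v i ≠ 0)
    (N : Submodule ℤ V) [Module.Finite ℤ N] :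
    ∃ g : Module.Dual ℚ V, ∀ y ∈ coneSpan v, y ∈ N → y ≠ 0 → 1 ≤ g y := by
  obtain ⟨φ, hφ⟩ := Module.exists_dual_forall_apply_pos v (hsc.eq_zero_of_sum_smul_eq_zero hv)
  obtain ⟨d, hd, hdφ⟩ := exists_nat_mul_apply_eq_intCast N φ
  refine ⟨(d : ℚ) • φ, fun y hy hyN hy0 => ?_⟩
  obtain ⟨z, hz⟩ := hdφ y hyN
  have hz_pos : (0 : ℚ) < z :=
    hz ▸ mul_pos (by exact_mod_cast hd) (apply_pos_of_mem_coneSpan hφ hy hy0)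
  rw [LinearMap.smul_apply, smul_eq_mul, hz]
  exact_mod_cast (Int.cast_pos.1 hz_pos : 0 < z)

variable {N : Submodule ℤ V}

lemma IsSmallVec.of_add_left {y z : V} (h : IsSmallVec N v (y + z)) (hy : y ∈ coneSpan v)
    (hyN : y ∈ N) (hy0 : y ≠ 0) (hz : z ∈ coneSpan v) (hzN : z ∈ N) : IsSmallVec N v y :=
  ⟨hy, hyN, hy0, fun i ⟨t, ht, htN, hyt⟩ =>
    h.2.2.2 i ⟨t + z, add_mem_coneSpan ht hz, N.add_mem htN hzN, by rw [hyt, add_assoc]⟩⟩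

lemma IsSmallVec.isMinimalVec {x : V} (hx : IsSmallVec N v x)
    (hx_indec : ¬ ∃ y z : V, y ∈ coneSpan v ∧ y ∈ N ∧ y ≠ 0 ∧
      z ∈ coneSpan v ∧ z ∈ N ∧ z ≠ 0 ∧ x = y + z) : IsMinimalVec N v x :=
  ⟨hx.1, hx.2.1, hx.2.2.1,
    fun i hxi => hx.2.2.2 i ⟨0, zero_mem_coneSpan, N.zero_mem, by rw [hxi, add_zero]⟩, hx_indec⟩

theorem IsSmallVec.mem_closure_isMinimalVec {g : Module.Dual ℚ V}
    (hg : ∀ y ∈ coneSpan v, y ∈ N → y ≠ 0 → 1 ≤ g y) {x : V} (hx : IsSmallVec N v x) {n : ℕ}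
    (hn : g x ≤ n) : x ∈ AddSubmonoid.closure {y : V | IsMinimalVec N v y} := by
  induction n generalizing x with
  | zero =>
    have := hg x hx.1 hx.2.1 hx.2.2.1
    push_cast at hn
    linarith
  | succ n ih =>
    by_cases hx_dec : ∃ y z : V, y ∈ coneSpan v ∧ y ∈ N ∧ y ≠ 0 ∧
        z ∈ coneSpan v ∧ z ∈ N ∧ z ≠ 0 ∧ x = y + z
    · obtain ⟨y, z, hy, hyN, hy0, hz, hzN, hz0, rfl⟩ := hx_dec
      have hgy := hg y hy hyN hy0
      have hgz := hg z hz hzN hz0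
      rw [map_add] at hn
      push_cast at hn
      exact add_mem (ih (hx.of_add_left hy hyN hy0 hz hzN) (by linarith))
        (ih ((add_comm y z ▸ hx).of_add_left hz hzN hz0 hy hyN) (by linarith))
    · exact AddSubmonoid.subset_closure (hx.isMinimalVec hx_dec)

end Cone

/-- Every small vector of a strictly convex finitely generated cone
`σ = ⟨v₁,…,v_k⟩` lies in the additive submonoid generated by the minimal vectors of `σ`. -/
theorem small_vector_mem_closure_of_minimal_vectors
    {V : Type u} [AddCommGroup V] [Module ℚ V] (N : Submodule ℤ V) [Module.Finite ℤ ↥N]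
    {k : ℕ} (v : Fin k → V)
    (hsc : StrictlyConvexCone v) (hvert : IsVertexFamily N v)
    (x : V) (hx : IsSmallVec N v x) :
    x ∈ AddSubmonoid.closure {y : V | IsMinimalVec N v y} := by
  obtain ⟨g, hg⟩ := hsc.exists_dual_one_le (fun i => (hvert.1 i).2.1) N
  obtain ⟨n, hn⟩ := exists_nat_ge (g x)
  exact hx.mem_closure_isMinimalVec hg hn
end

section
/- Let σ = τ ⊕ ρ be a direct sum decomposition of a strictly convex finitely generated cone σ in a lattice N, meaning N_σ = N_τ ⊕ N_ρ and σ = τ + ρ, where τ and ρ are strictly convex finitely generated cones with τ ⊆ N_τ ⊗ ℚ and ρ ⊆ N_ρ ⊗ ℚ, and ρ is regular. Then every minimal vector of σ and every small vector of σ lies in τ. -/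
universe u

/-! Write an integral vector `y` of `σ` as `y = a + b` with `a ∈ τ` and `b ∈ ρ`, and, using
`N_σ = N_τ + N_ρ`, as `y = u + w` with `u ∈ N_τ` and `w ∈ N_ρ`. Then `w - b = a - u` lies in
`span τ ∩ span ρ` and has a nonzero multiple in `N`, so it vanishes because `N_τ ∩ N_ρ = 0`.
Hence `b` is integral, and since the vertices of `ρ` are part of a basis of `N`, its
coefficients are integers: either `b = 0` and `y ∈ τ`, or `y - r_j ∈ σ` for a vertex `r_j` of `ρ`,
which prevents `y` from being minimal or small. -/

section

variable {V : Type u} [AddCommGroup V] [Module ℚ V]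
  {N : Submodule ℤ V} {k s : ℕ} {t : Fin k → V} {r : Fin s → V}

open Submodule

lemma exists_zsmul_mem_of_mem_span {p : V} (hp : p ∈ span ℚ (N : Set V)) :
    ∃ D : ℤ, D ≠ 0 ∧ D • p ∈ N := by
  induction hp using span_induction with
  | mem x hx => exact ⟨1, one_ne_zero, by simpa using hx⟩
  | zero => exact ⟨1, one_ne_zero, by simp⟩
  | add x y _ _ hx hy =>
    obtain ⟨D, hD, hxN⟩ := hx
    obtain ⟨E, hE, hyN⟩ := hy
    refine ⟨D * E, mul_ne_zero hD hE, ?_⟩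
    rw [smul_add, mul_comm, mul_smul, mul_comm, mul_smul]
    exact N.add_mem (N.smul_mem E hxN) (N.smul_mem D hyN)
  | smul q x _ hx =>
    obtain ⟨D, hD, hxN⟩ := hx
    refine ⟨q.den * D, mul_ne_zero (by exact_mod_cast q.den_ne_zero) hD, ?_⟩
    have hclear : (q.den * D : ℤ) • q • x = q.num • D • x := by
      rw [← Int.cast_smul_eq_zsmul ℚ, ← Int.cast_smul_eq_zsmul ℚ q.num,
        ← Int.cast_smul_eq_zsmul ℚ D, smul_smul, smul_smul]
      push_cast
      rw [mul_right_comm, Rat.den_mul_eq_num]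
    rw [hclear]
    exact N.smul_mem _ hxN

lemma eq_zero_of_disjoint_latticeOf (hdisj : Disjoint (latticeOf N t) (latticeOf N r)) {p : V}
    (hpN : p ∈ span ℚ (N : Set V)) (ht : p ∈ span ℚ (Set.range t))
    (hr : p ∈ span ℚ (Set.range r)) : p = 0 := by
  obtain ⟨D, hD, hDp⟩ := exists_zsmul_mem_of_mem_span hpN
  have hDp0 : D • p = 0 := disjoint_def.mp hdisj _
    (mem_inf.mpr ⟨hDp, ((span ℚ _).restrictScalars ℤ).smul_mem D ht⟩)
    (mem_inf.mpr ⟨hDp, ((span ℚ _).restrictScalars ℤ).smul_mem D hr⟩)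
  rw [← Int.cast_smul_eq_zsmul ℚ] at hDp0
  exact (smul_eq_zero.mp hDp0).resolve_left (by exact_mod_cast hD)

lemma mem_of_add_mem_latticeOf_sup (hdisj : Disjoint (latticeOf N t) (latticeOf N r))
    (hrN : ∀ j, r j ∈ N) {a b : V} (ha : a ∈ span ℚ (Set.range t))
    (hb : b ∈ span ℚ (Set.range r)) (hab : a + b ∈ latticeOf N t ⊔ latticeOf N r) : b ∈ N := by
  obtain ⟨u, hu, w, hw, huw⟩ := mem_sup.mp hab
  have hwb : w - b = 0 := by
    refine eq_zero_of_disjoint_latticeOf hdisj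
      (sub_mem (subset_span hw.1) (span_mono (Set.range_subset_iff.mpr hrN) hb)) ?_
      (sub_mem hw.2 hb)
    rw [show w - b = a - u by rw [sub_eq_sub_iff_add_eq_add, add_comm, huw]]
    exact sub_mem ha hu.2
  exact sub_eq_zero.mp hwb ▸ hw.1

lemma self_mem_coneSpan (v : Fin k → V) (i : Fin k) : v i ∈ coneSpan v :=
  ⟨Pi.single i 1, fun j => by simp [Pi.single_apply, apply_ite], by simp [Pi.single_apply]⟩

lemma coneSpan_subset_span (v : Fin k → V) : coneSpan v ⊆ span ℚ (Set.range v) := by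
  rintro _ ⟨c, -, rfl⟩
  exact sum_smul_mem _ c fun i _ => subset_span (Set.mem_range_self i)

lemma mem_coneSpan_append {y : V} :
    y ∈ coneSpan (Fin.append t r) ↔ ∃ (c : Fin k → ℚ) (d : Fin s → ℚ),
      (∀ i, 0 ≤ c i) ∧ (∀ j, 0 ≤ d j) ∧ y = ∑ i, c i • t i + ∑ j, d j • r j := by
  constructor
  · rintro ⟨e, he, rfl⟩
    exact ⟨fun i => e (Fin.castAdd s i), fun j => e (Fin.natAdd k j), fun i => he _,
      fun j => he _, by simp [Fin.sum_univ_add]⟩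
  · rintro ⟨c, d, hc, hd, rfl⟩
    exact ⟨Fin.append c d, Fin.addCases (by simpa using hc) (by simpa using hd),
      by simp [Fin.sum_univ_add]⟩

lemma sub_mem_coneSpan_append {c : Fin k → ℚ} {d : Fin s → ℚ} (hc : ∀ i, 0 ≤ c i)
    (hd : ∀ j, 0 ≤ d j) {j : Fin s} (hj : 1 ≤ d j) :
    ∑ i, c i • t i + ∑ i, d i • r i - r j ∈ coneSpan (Fin.append t r) := by
  classical
  refine mem_coneSpan_append.mpr ⟨c, d - Pi.single j 1, hc, fun i => ?_, ?_⟩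
  · rcases eq_or_ne i j with rfl | hi
    · simpa using hj
    · simpa [hi] using hd i
  · simp [sub_smul, Finset.sum_sub_distrib, Pi.single_apply, add_sub_assoc]

namespace IsRegularCone

lemma mem (h : IsRegularCone N r) (j : Fin s) : r j ∈ N := by
  obtain ⟨ι, b, f, -, hb⟩ := h
  exact hb j ▸ (b (f j)).2

lemma ne_zero (h : IsRegularCone N r) (j : Fin s) : r j ≠ 0 := by
  obtain ⟨ι, b, f, -, hb⟩ := h
  rw [← hb j]
  exact_mod_cast b.ne_zero (f j)

lemma exists_int_eq_of_sum_smul_mem (h : IsRegularCone N r) {q : Fin s → ℚ}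
    (hq : ∑ j, q j • r j ∈ N) (j : Fin s) : ∃ n : ℤ, q j = n := by
  classical
  obtain ⟨ι, b, f, hf, hb⟩ := h
  obtain ⟨⟨D, hD⟩, hDq⟩ :=
    IsLocalization.exist_integer_multiples (nonZeroDivisors ℤ) Finset.univ q
  choose n hn using fun i => hDq i (Finset.mem_univ i)
  simp only [algebraMap_int_eq, eq_intCast, zsmul_eq_mul] at hn
  let w : N := ⟨_, hq⟩
  have hDw : D • w = ∑ i, n i • b (f i) := by
    ext
    simp only [w, coe_smul, coe_sum, hb, Finset.smul_sum]
    refine Finset.sum_congr rfl fun i _ => ?_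
    rw [← Int.cast_smul_eq_zsmul ℚ, ← Int.cast_smul_eq_zsmul ℚ, smul_smul, hn]
  have hcoord : D * b.repr w (f j) = n j := by
    simpa [hf.eq_iff, Finsupp.single_apply] using congr(b.repr $hDw (f j))
  have hD0 : (D : ℚ) ≠ 0 := Int.cast_ne_zero.mpr (nonZeroDivisors.ne_zero hD)
  refine ⟨b.repr w (f j), mul_left_cancel₀ hD0 ?_⟩
  rw [← hn, ← hcoord, Int.cast_mul]

end IsRegularCone

lemma mem_coneSpan_or_sub_mem_coneSpan_append
    (hsup : latticeOf N (Fin.append t r) = latticeOf N t ⊔ latticeOf N r)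
    (hdisj : Disjoint (latticeOf N t) (latticeOf N r)) (hreg : IsRegularCone N r) {y : V}
    (hy : y ∈ coneSpan (Fin.append t r)) (hyN : y ∈ N) :
    y ∈ coneSpan t ∨ ∃ j, y - r j ∈ coneSpan (Fin.append t r) := by
  have hyσ : y ∈ latticeOf N t ⊔ latticeOf N r :=
    hsup ▸ mem_inf.mpr ⟨hyN, coneSpan_subset_span _ hy⟩
  obtain ⟨c, d, hc, hd, rfl⟩ := mem_coneSpan_append.mp hy
  have hbN : ∑ j, d j • r j ∈ N := mem_of_add_mem_latticeOf_sup hdisj hreg.mem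
    (coneSpan_subset_span t ⟨c, hc, rfl⟩) (coneSpan_subset_span r ⟨d, hd, rfl⟩) hyσ
  by_cases hd0 : ∀ j, d j = 0
  · exact .inl ⟨c, hc, by simp [hd0]⟩
  · obtain ⟨j, hj⟩ := not_forall.mp hd0
    obtain ⟨n, hn⟩ := hreg.exists_int_eq_of_sum_smul_mem hbN j
    have hn0 : 0 < n := by exact_mod_cast hn ▸ (hd j).lt_of_ne' hj
    exact .inr ⟨j, sub_mem_coneSpan_append hc hd (hn ▸ by exact_mod_cast hn0)⟩

end

theorem minimal_and_small_vectors_lie_in_first_factor_general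
    {V : Type u} [AddCommGroup V] [Module ℚ V] (N : Submodule ℤ V)
    {m l : ℕ} (t : Fin m → V) (r : Fin l → V)
    (hsup : latticeOf N (Fin.append t r) = latticeOf N t ⊔ latticeOf N r)
    (hdisj : Disjoint (latticeOf N t) (latticeOf N r))
    (hreg : IsRegularCone N r)
    (x : V) :
    (IsMinimalVec N (Fin.append t r) x → x ∈ coneSpan t)
      ∧ (IsSmallVec N (Fin.append t r) x → x ∈ coneSpan t) := by
  constructor
  · rintro ⟨hx, hxN, -, hx_ne, hx_irred⟩
    refine (mem_coneSpan_or_sub_mem_coneSpan_append hsup hdisj hreg hx hxN).resolve_right ?_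
    rintro ⟨j, hj⟩
    have hrj := self_mem_coneSpan (Fin.append t r) (Fin.natAdd m j)
    rw [Fin.append_right] at hrj
    refine hx_irred ⟨r j, x - r j, hrj, hreg.mem j, hreg.ne_zero j, hj,
      N.sub_mem hxN (hreg.mem j), ?_, by abel⟩
    simpa [sub_eq_zero] using hx_ne (Fin.natAdd m j)
  · rintro ⟨hx, hxN, -, hx_small⟩
    refine (mem_coneSpan_or_sub_mem_coneSpan_append hsup hdisj hreg hx hxN).resolve_right ?_
    rintro ⟨j, hj⟩
    exact hx_small (Fin.natAdd m j) ⟨x - r j, hj, N.sub_mem hxN (hreg.mem j), by simp⟩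

/-- If `σ = τ ⊕ ρ` is a direct sum decomposition of a strictly convex
finitely generated cone (so `σ = τ + ρ` and `N_σ = N_τ ⊕ N_ρ`) with `ρ` regular, then every
minimal vector and every small vector of `σ` lies in `τ`. -/
theorem minimal_and_small_vectors_lie_in_first_factor
    {V : Type u} [AddCommGroup V] [Module ℚ V] (N : Submodule ℤ V) [Module.Finite ℤ ↥N]
    {m l : ℕ} (t : Fin m → V) (r : Fin l → V)
    (hsc : StrictlyConvexCone (Fin.append t r))
    (hvert : IsVertexFamily N (Fin.append t r))
    (hsup : latticeOf N (Fin.append t r) = latticeOf N t ⊔ latticeOf N r)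
    (hdisj : Disjoint (latticeOf N t) (latticeOf N r))
    (hreg : IsRegularCone N r)
    (x : V) :
    (IsMinimalVec N (Fin.append t r) x → x ∈ coneSpan t)
      ∧ (IsSmallVec N (Fin.append t r) x → x ∈ coneSpan t) :=
  minimal_and_small_vectors_lie_in_first_factor_general N t r hsup hdisj hreg x
end

section
/- Let σ = ⟨v₁,…,v_k⟩ be a simplicial cone in a lattice N with det(σ) = n > 1. Then there exists a small vector of σ of the form v = a₁v₁ + … + a_kv_k with 0 ≤ aᵢ < 1 and aᵢ ∈ (1/n)·ℤ≥0 for every i. -/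
universe u

/-!
Since `|det σ| ≠ 1`, the vertices span a proper sublattice of `N_σ`, so some `w ∈ N_σ` is not an
integral combination of them. By Cramer's rule `n • w` is one, so `w = ∑ (mᵢ / n) • vᵢ` with
`mᵢ ∈ ℤ`. Reducing the coefficients modulo `1` gives `x = ∑ fract (mᵢ / n) • vᵢ`, a nonzero lattice
point of the half-open parallelepiped spanned by the vertices; as all its coordinates are `< 1`,
no vertex can be split off from `x` inside `σ`.
-/

namespace Module.Basis

variable {ι R M : Type*} [Fintype ι] [DecidableEq ι] [CommRing R] [AddCommGroup M] [Module R M]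

theorem det_toMatrix_smul_eq_sum_cramer (b : Basis ι R M) (u : ι → M) (w : M) :
    (b.toMatrix u).det • w = ∑ j, Matrix.cramer (b.toMatrix u) (b.repr w) j • u j := by
  refine b.ext_elem fun i => ?_
  have hcramer := congrFun (Matrix.mulVec_cramer (b.toMatrix u) (b.repr w)) i
  simp only [Matrix.mulVec, dotProduct, toMatrix_apply, Pi.smul_apply, smul_eq_mul] at hcramer
  simp only [map_smul, map_sum, Finsupp.smul_apply, Finsupp.coe_finsetSum, Finset.sum_apply,
    smul_eq_mul, ← hcramer, mul_comm]

theorem det_toMatrix_smul_mem_span (b : Basis ι R M) (u : ι → M) (w : M) :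
    (b.toMatrix u).det • w ∈ Submodule.span R (Set.range u) := by
  rw [det_toMatrix_smul_eq_sum_cramer]
  exact Submodule.sum_mem _ fun j _ => Submodule.smul_mem _ _ (Submodule.subset_span ⟨j, rfl⟩)

theorem span_ne_top_of_not_isUnit_det (b : Basis ι R M) {u : ι → M}
    (hu : LinearIndependent R u) (hdet : ¬IsUnit (b.toMatrix u).det) :
    Submodule.span R (Set.range u) ≠ ⊤ := by
  intro htop
  have := b.isUnit_det (Basis.mk hu htop.ge)
  rw [det_apply, coe_mk] at this
  exact hdet this

end Module.Basis

section RationalCoefficients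

variable {ι V : Type*} [Fintype ι] [AddCommGroup V] [Module ℚ V]

theorem sum_fract_smul_eq_sub (q : ι → ℚ) (v : ι → V) :
    ∑ i, Int.fract (q i) • v i = ∑ i, q i • v i - ∑ i, ⌊q i⌋ • v i := by
  rw [← Finset.sum_sub_distrib]
  refine Finset.sum_congr rfl fun i _ => ?_
  rw [Int.fract, sub_smul, Int.cast_smul_eq_zsmul]

theorem sum_fract_smul_mem {L : Submodule ℤ V} {q : ι → ℚ} {v : ι → V} (hv : ∀ i, v i ∈ L)
    (hqv : ∑ i, q i • v i ∈ L) : ∑ i, Int.fract (q i) • v i ∈ L := by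
  rw [sum_fract_smul_eq_sub]
  exact L.sub_mem hqv (L.sum_mem fun i _ => L.smul_mem _ (hv i))

theorem sum_fract_smul_ne_zero {q : ι → ℚ} {v : ι → V}
    (hqv : ∀ c : ι → ℤ, ∑ i, q i • v i ≠ ∑ i, c i • v i) : ∑ i, Int.fract (q i) • v i ≠ 0 := by
  rw [sum_fract_smul_eq_sub, sub_ne_zero]
  exact hqv _

theorem eq_sum_div_smul_of_smul_eq_sum {n : ℕ} (hn : n ≠ 0) {w : V} {m : ι → ℤ} {v : ι → V}
    (h : (n : ℤ) • w = ∑ i, m i • v i) : w = ∑ i, ((m i : ℚ) / n) • v i := by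
  simp only [div_eq_inv_mul, mul_smul, ← Finset.smul_sum, Int.cast_smul_eq_zsmul, ← h,
    natCast_zsmul, ← Nat.cast_smul_eq_nsmul ℚ]
  rw [inv_smul_smul₀ (Nat.cast_ne_zero.mpr hn)]

end RationalCoefficients

theorem isSmallVec_sum_smul {V : Type u} [AddCommGroup V] [Module ℚ V] {N : Submodule ℤ V}
    {k : ℕ} {v : Fin k → V} (hind : LinearIndependent ℚ v) {a : Fin k → ℚ}
    (ha₀ : ∀ i, 0 ≤ a i) (ha₁ : ∀ i, a i < 1) (hN : ∑ i, a i • v i ∈ N)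
    (hne : ∑ i, a i • v i ≠ 0) : IsSmallVec N v (∑ i, a i • v i) := by
  refine ⟨⟨a, ha₀, rfl⟩, hN, hne, ?_⟩
  rintro i ⟨_, ⟨c, hc₀, rfl⟩, -, hsum⟩
  have hvi : v i = ∑ j, (Pi.single i 1 : Fin k → ℚ) j • v j := by simp [Pi.single_apply]
  rw [hvi, ← Finset.sum_add_distrib] at hsum
  simp only [← add_smul] at hsum
  have := Fintype.linearIndependent_iffₛ.mp hind _ _ hsum i
  simp only [Pi.single_eq_same] at this
  linarith [ha₁ i, hc₀ i]

theorem Int.exists_fract_intCast_div_eq (m : ℤ) (n : ℕ) :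
    ∃ r : ℕ, Int.fract ((m : ℚ) / n) = r / n := by
  rcases eq_or_ne n 0 with rfl | hn
  · exact ⟨0, by simp⟩
  refine ⟨(m % n).toNat, ?_⟩
  have hmod : ((m % n).toNat : ℤ) = m % n := Int.toNat_of_nonneg (Int.emod_nonneg m (by omega))
  rw [Int.fract_div_intCast_eq_div_intCast_mod]
  congr 1
  exact_mod_cast hmod.symm

theorem exists_small_vector_of_one_lt_det_general
    {V : Type u} [AddCommGroup V] [Module ℚ V] (N : Submodule ℤ V)
    {k : ℕ} (v : Fin k → V)
    (hind : LinearIndependent ℚ v)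
    (hv : ∀ i, v i ∈ latticeOf N v)
    (b : Module.Basis (Fin k) ℤ ↥(latticeOf N v))
    (hdet : 1 < (coneDet N v hv b).natAbs) :
    ∃ (x : V) (a : Fin k → ℚ), IsSmallVec N v x ∧ x = ∑ i, a i • v i ∧
      ∀ i, 0 ≤ a i ∧ a i < 1 ∧
        ∃ m : ℕ, a i = (m : ℚ) / ((coneDet N v hv b).natAbs : ℚ) := by
  set n := (coneDet N v hv b).natAbs
  let u : Fin k → latticeOf N v := fun i => ⟨v i, hv i⟩
  have hdet_eq : coneDet N v hv b = (b.toMatrix u).det := rfl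
  have hu : LinearIndependent ℤ u := .of_comp (latticeOf N v).subtype (hind.restrict_scalars' ℤ)
  obtain ⟨w, hw⟩ := SetLike.exists_not_mem_of_ne_top _ (b.span_ne_top_of_not_isUnit_det hu
    (by rw [← hdet_eq, Int.isUnit_iff_natAbs_eq]; omega))
  have hnw : (n : ℤ) • w ∈ Submodule.span ℤ (Set.range u) := by
    obtain ⟨c, hc⟩ := Int.dvd_natAbs.mpr (dvd_refl (coneDet N v hv b))
    rw [hc, mul_comm, mul_smul, hdet_eq]
    exact Submodule.smul_mem _ _ (b.det_toMatrix_smul_mem_span u w)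
  obtain ⟨m, hm⟩ := (Submodule.mem_span_range_iff_exists_fun ℤ).mp hnw
  have hwv : (w : V) = ∑ i, ((m i : ℚ) / n) • v i :=
    eq_sum_div_smul_of_smul_eq_sum (by omega) (by simpa [u] using congrArg Subtype.val hm.symm)
  refine ⟨_, _, isSmallVec_sum_smul hind (fun i => Int.fract_nonneg _) (fun i => Int.fract_lt_one _)
    (sum_fract_smul_mem (fun i => (hv i).1) (hwv ▸ w.2.1)) (sum_fract_smul_ne_zero ?_), rfl,
    fun i => ⟨Int.fract_nonneg _, Int.fract_lt_one _, Int.exists_fract_intCast_div_eq (m i) n⟩⟩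
  rw [← hwv]
  rintro c hc
  exact hw ((Submodule.mem_span_range_iff_exists_fun ℤ).mpr ⟨c, Subtype.ext (by simp [u, hc])⟩)

/-- If a simplicial cone `σ = ⟨v₁,…,v_k⟩` has determinant `n > 1`, then
there exists a small vector of `σ` of the form `∑ aᵢ • vᵢ` with `0 ≤ aᵢ < 1` and
`aᵢ ∈ (1/n)·ℤ≥0` for every `i`. -/
theorem exists_small_vector_of_one_lt_det
    {V : Type u} [AddCommGroup V] [Module ℚ V] (N : Submodule ℤ V) [Module.Finite ℤ ↥N]
    {k : ℕ} (v : Fin k → V)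
    (hind : LinearIndependent ℚ v) (hprim : ∀ i, IsPrimitive N (v i))
    (hv : ∀ i, v i ∈ latticeOf N v)
    (b : Module.Basis (Fin k) ℤ ↥(latticeOf N v))
    (hdet : 1 < (coneDet N v hv b).natAbs) :
    ∃ (x : V) (a : Fin k → ℚ), IsSmallVec N v x ∧ x = ∑ i, a i • v i ∧
      ∀ i, 0 ≤ a i ∧ a i < 1 ∧
        ∃ m : ℕ, a i = (m : ℚ) / ((coneDet N v hv b).natAbs : ℚ) :=
  exists_small_vector_of_one_lt_det_general N v hind hv b hdet
end

section
/- Let σ = ⟨v₁,…,v_s⟩ be a simplicial cone in a lattice N and let v be a minimal vector of σ, written v = a₁v₁ + … + a_sv_s (so that 0 ≤ aᵢ < 1 for all i). Then for every i with aᵢ > 0, the simplicial cone σᵢ = ⟨v, v₁,…,v_{i−1}, v_{i+1},…,v_s⟩ satisfies det(σᵢ) = aᵢ·det(σ); in particular det(σᵢ) < det(σ). (Hence a star subdivision at a minimal point strictly decreases the determinants of all subdivided cones.) -/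
/-!
Record the `b`-coordinates of the generators as the columns of an integer matrix. A `ℤ`-basis
of a lattice in a `ℚ`-vector space is still `ℚ`-linearly independent, so coordinates may be
computed over `ℚ`: the column of `x = ∑ aⱼ vⱼ` is `∑ aⱼ · colⱼ`. Replacing column `i` by it
multiplies the determinant by `aᵢ`, and the determinant is nonzero because the `vⱼ` are
`ℚ`-independent; `0 < aᵢ < 1` gives the strict decrease.
-/

universe u

open Module Matrix

namespace Module.Basis

variable {V ι : Type*} [AddCommGroup V] [Module ℚ V] {L : Submodule ℤ V} (b : Basis ι ℤ L)

theorem linearIndependent_rat_coe : LinearIndependent ℚ (fun p => (b p : V)) :=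
  (LinearIndependent.iff_fractionRing ℤ ℚ).mp (b.linearIndependent.map' L.subtype (by simp))

variable [Fintype ι]

theorem linearCombination_rat_repr (y : L) :
    Fintype.linearCombination ℚ (fun p => (b p : V)) (fun p => (b.repr y p : ℚ)) = y := by
  rw [Fintype.linearCombination_apply]
  conv_rhs => rw [← b.sum_repr y]
  simp only [Int.cast_smul_eq_zsmul, Submodule.coe_sum, Submodule.coe_smul]

theorem repr_rat_eq_sum_smul {κ : Type*} [Fintype κ] (w : κ → L) (a : κ → ℚ) (y : L)
    (hy : (y : V) = ∑ j, a j • (w j : V)) :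
    (fun p => (b.repr y p : ℚ)) = ∑ j, a j • fun p => (b.repr (w j) p : ℚ) := by
  apply b.linearIndependent_rat_coe.fintypeLinearCombination_injective
  rw [map_sum, linearCombination_rat_repr, hy]
  simp only [map_smul, linearCombination_rat_repr]

variable [DecidableEq ι]

theorem det_repr_ne_zero {w : ι → V} (hw : ∀ q, w q ∈ L) (hind : LinearIndependent ℚ w) :
    (Matrix.of fun p q => b.repr ⟨w q, hw q⟩ p).det ≠ 0 := by
  set M := Matrix.of fun p q => b.repr ⟨w q, hw q⟩ p
  have hcols : LinearIndependent ℚ (M.map (Int.cast : ℤ → ℚ)).col := by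
    refine .of_comp (Fintype.linearCombination ℚ fun p => (b p : V)) ?_
    convert hind using 1
    funext q
    exact b.linearCombination_rat_repr ⟨w q, hw q⟩
  have hdet := (isUnit_iff_isUnit_det _).mp (linearIndependent_cols_iff_isUnit.mp hcols)
  rw [isUnit_iff_ne_zero, ← Int.cast_det] at hdet
  exact_mod_cast hdet

theorem det_repr_update_eq_mul {w : ι → V} (hw : ∀ q, w q ∈ L) {x : V} (a : ι → ℚ)
    (hx : x = ∑ j, a j • w j) (i : ι) (hmem : ∀ q, Function.update w i x q ∈ L) :
    ((Matrix.of fun p q => b.repr ⟨Function.update w i x q, hmem q⟩ p).det : ℚ) =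
      a i * (Matrix.of fun p q => b.repr ⟨w q, hw q⟩ p).det := by
  set M := Matrix.of fun p q => b.repr ⟨w q, hw q⟩ p
  have hxL : x ∈ L := by simpa using hmem i
  have hcolx := b.repr_rat_eq_sum_smul (fun j => ⟨w j, hw j⟩) a ⟨x, hxL⟩ hx
  have hcols : (Matrix.of fun p q => b.repr ⟨Function.update w i x q, hmem q⟩ p).map
      (Int.cast : ℤ → ℚ) = (M.map Int.cast).updateCol i fun p => ∑ j, a j • M.map Int.cast p j := by
    ext p q
    rcases eq_or_ne q i with rfl | hq
    · simpa [M] using congrFun hcolx p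
    · simp [M, hq]
  rw [Int.cast_det, Int.cast_det, hcols, det_updateCol_sum, smul_eq_mul]

end Module.Basis

theorem star_subdivision_at_minimal_point_decreases_det_general
    {V : Type u} [AddCommGroup V] [Module ℚ V] (N : Submodule ℤ V)
    {s : ℕ} (v : Fin s → V)
    (hind : LinearIndependent ℚ v)
    (hv : ∀ j, v j ∈ latticeOf N v)
    (b : Module.Basis (Fin s) ℤ ↥(latticeOf N v))
    (x : V)
    (a : Fin s → ℚ) (ha1 : ∀ j, a j < 1)
    (hx : x = ∑ j, a j • v j)
    (i : Fin s) (hai : 0 < a i)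
    (hmem : ∀ q, Function.update v i x q ∈ latticeOf N v) :
    (((Matrix.of fun p q => b.repr ⟨Function.update v i x q, hmem q⟩ p).det.natAbs : ℚ)
        = a i * ((coneDet N v hv b).natAbs : ℚ))
      ∧ (Matrix.of fun p q => b.repr ⟨Function.update v i x q, hmem q⟩ p).det.natAbs
          < (coneDet N v hv b).natAbs := by
  have habs : ((Matrix.of fun p q => b.repr ⟨Function.update v i x q, hmem q⟩ p).det.natAbs : ℚ)
      = a i * ((coneDet N v hv b).natAbs : ℚ) := by
    simp only [Nat.cast_natAbs, Int.cast_abs, coneDet, b.det_repr_update_eq_mul hv a hx i hmem,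
      abs_mul, abs_of_pos hai]
  have hpos : (0 : ℚ) < (coneDet N v hv b).natAbs := by
    simpa [coneDet] using b.det_repr_ne_zero hv hind
  refine ⟨habs, ?_⟩
  exact_mod_cast habs ▸ mul_lt_of_lt_one_left hpos (ha1 i)

/-- Let `x = ∑ aⱼ • vⱼ` be a minimal vector of a simplicial cone
`σ = ⟨v₁,…,v_s⟩` (so `0 ≤ aⱼ < 1`). For every `i` with `aᵢ > 0`, the cone
`σᵢ = ⟨x, v₁,…,v̌ᵢ,…,v_s⟩` (obtained from `σ` by replacing `vᵢ` with `x`) satisfies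
`det σᵢ = aᵢ · det σ`; in particular `det σᵢ < det σ`. -/
theorem star_subdivision_at_minimal_point_decreases_det
    {V : Type u} [AddCommGroup V] [Module ℚ V] (N : Submodule ℤ V) [Module.Finite ℤ ↥N]
    {s : ℕ} (v : Fin s → V)
    (hind : LinearIndependent ℚ v) (hprim : ∀ j, IsPrimitive N (v j))
    (hv : ∀ j, v j ∈ latticeOf N v)
    (b : Module.Basis (Fin s) ℤ ↥(latticeOf N v))
    (x : V) (hxmin : IsMinimalVec N v x)
    (a : Fin s → ℚ) (ha0 : ∀ j, 0 ≤ a j) (ha1 : ∀ j, a j < 1)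
    (hx : x = ∑ j, a j • v j)
    (i : Fin s) (hai : 0 < a i)
    (hmem : ∀ q, Function.update v i x q ∈ latticeOf N v) :
    (((Matrix.of fun p q => b.repr ⟨Function.update v i x q, hmem q⟩ p).det.natAbs : ℚ)
        = a i * ((coneDet N v hv b).natAbs : ℚ))
      ∧ (Matrix.of fun p q => b.repr ⟨Function.update v i x q, hmem q⟩ p).det.natAbs
          < (coneDet N v hv b).natAbs :=
  star_subdivision_at_minimal_point_decreases_det_general N v hind hv b x a ha1 hx i hai hmem
end

section
/- Let (σ,ω) be a relatively simplicial pair in a lattice N, with σ = ⟨v₁,…,v_k, w₁,…,w_s⟩ and ω = ⟨w₁,…,w_s⟩ a face of σ, and let v be a minimal vector of the pair (σ,ω), written v = Σᵢ aᵢvᵢ + Σⱼ cⱼwⱼ with 0 ≤ aᵢ < 1 and cⱼ ≥ 0. Then for every i with aᵢ > 0, the pair (σᵢ, ω) with σᵢ = ⟨v, v₁,…,v_{i−1}, v_{i+1},…,v_k, w₁,…,w_s⟩ satisfies det(σᵢ,ω) = aᵢ·det(σ,ω); in particular det(σᵢ,ω) < det(σ,ω). -/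
universe u

/-!
Clearing denominators in `x = ∑ aᵢ vᵢ + ∑ cⱼ wⱼ` gives `d • x ≡ ∑ nᵢ • vᵢ` modulo `N_ω` with
`nᵢ = d aᵢ`. Since the determinant is multilinear and alternating in the columns, replacing `vᵢ`
by `x` multiplies it by `nᵢ / d = aᵢ`. It does not vanish, because `v₁, …, v_k` remain linearly
independent modulo `span ω`, so `0 < aᵢ < 1` makes it strictly smaller in absolute value.
-/

open Function

namespace Module.Basis

variable {R M ι : Type*} [CommRing R] [AddCommGroup M] [Module R M] [Fintype ι] [DecidableEq ι]

theorem det_ne_zero_of_linearIndependent [IsDomain R] (b : Basis ι R M) {y : ι → M}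
    (hy : LinearIndependent R y) : b.det y ≠ 0 := by
  rw [b.det_apply, ← Matrix.nonsingular_iff_det_ne_zero, ← Matrix.linearIndependent_col_iff]
  exact hy.map' b.equivFun.toLinearMap b.equivFun.ker

theorem mul_det_update_of_smul_eq_sum (b : Basis ι R M) (y : ι → M) (i : ι) {z : M} {d : R}
    {n : ι → R} (h : d • z = ∑ q, n q • y q) : d * b.det (update y i z) = n i * b.det y := by
  rw [← smul_eq_mul, ← AlternatingMap.map_update_smul, h, AlternatingMap.map_update_sum,
    Finset.sum_eq_single i]
  · rw [AlternatingMap.map_update_smul, update_eq_self, smul_eq_mul]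
  · intro q _ hq
    rw [AlternatingMap.map_update_smul, AlternatingMap.map_update_self _ _ hq.symm, smul_zero]
  · simp

end Module.Basis

theorem natAbs_eq_mul_and_lt_of_cast_eq_mul {D D' : ℤ} {t : ℚ} (h : (D' : ℚ) = t * D) (ht0 : 0 ≤ t)
    (ht1 : t < 1) (hD : D ≠ 0) : (D'.natAbs : ℚ) = t * D.natAbs ∧ D'.natAbs < D.natAbs := by
  have habs : (D'.natAbs : ℚ) = t * D.natAbs := by
    rw [Nat.cast_natAbs, Nat.cast_natAbs, Int.cast_abs, Int.cast_abs, h, abs_mul, abs_of_nonneg ht0]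
  have hlt : t * (D.natAbs : ℚ) < D.natAbs := mul_lt_of_lt_one_left (by positivity) ht1
  exact ⟨habs, by exact_mod_cast habs ▸ hlt⟩

section QuotientLattice

variable {V : Type*} [AddCommGroup V] [Module ℚ V] {k s : ℕ} {v : Fin k → V} {w : Fin s → V}
  {N L : Submodule ℤ V}

theorem RelSimplicial.linearIndependent_mk (hrel : RelSimplicial v w) (hv : ∀ q, v q ∈ L) :
    LinearIndependent ℤ fun q =>
      (Submodule.Quotient.mk ⟨v q, hv q⟩ : L ⧸ (latticeOf N w).comap L.subtype) := by
  rw [Fintype.linearIndependent_iff]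
  intro g hg
  have hmem : ∑ q, g q • v q ∈ Submodule.span ℚ (Set.range w) := by
    have h0 : ((latticeOf N w).comap L.subtype).mkQ (∑ q, g q • ⟨v q, hv q⟩) = 0 := by
      rw [map_sum]
      simpa only [map_smul, Submodule.mkQ_apply] using hg
    rw [Submodule.mkQ_apply, Submodule.Quotient.mk_eq_zero, Submodule.mem_comap] at h0
    simpa using (Submodule.mem_inf.mp h0).2
  obtain ⟨e, he⟩ := (Submodule.mem_span_range_iff_exists_fun ℚ).mp hmem
  have hzero : ∑ q, (g q : ℚ) • v q + ∑ j, (-e j) • w j = 0 := by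
    simp_rw [Int.cast_smul_eq_zsmul, neg_smul, Finset.sum_neg_distrib, ← he, add_neg_cancel]
  exact fun q => by exact_mod_cast hrel _ _ hzero q

theorem exists_smul_mk_eq_sum_smul_mk (hL : L ≤ N) (hv : ∀ q, v q ∈ L) {x : V} (hxL : x ∈ L)
    (a : Fin k → ℚ) (c : Fin s → ℚ) (hx : x = ∑ q, a q • v q + ∑ j, c j • w j) :
    ∃ (d : ℤ) (n : Fin k → ℤ), d ≠ 0 ∧ (∀ q, (n q : ℚ) = d * a q) ∧
      d • (Submodule.Quotient.mk ⟨x, hxL⟩ : L ⧸ (latticeOf N w).comap L.subtype) =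
        ∑ q, n q • Submodule.Quotient.mk ⟨v q, hv q⟩ := by
  obtain ⟨⟨d, hd⟩, hint⟩ := IsLocalization.exist_integer_multiples_of_finite (nonZeroDivisors ℤ) a
  choose n hn using hint
  have hn' : ∀ q, (n q : ℚ) = d * a q := fun q => by simpa using hn q
  refine ⟨d, n, nonZeroDivisors.coe_ne_zero ⟨d, hd⟩, hn', ?_⟩
  have hdiff : d • x - ∑ q, n q • v q = ∑ j, ((d : ℚ) * c j) • w j := by
    rw [hx]
    simp_rw [← Int.cast_smul_eq_zsmul ℚ, hn', smul_add, Finset.smul_sum, smul_smul]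
    abel
  have hmem : d • (⟨x, hxL⟩ : L) - ∑ q, n q • (⟨v q, hv q⟩ : L) ∈
      (latticeOf N w).comap L.subtype := by
    refine Submodule.mem_inf.mpr ⟨?_, ?_⟩
    · simpa using sub_mem (N.smul_mem d (hL hxL))
        (N.sum_mem fun q _ => N.smul_mem (n q) (hL (hv q)))
    · simpa [hdiff] using Submodule.sum_mem _ fun j _ =>
        Submodule.smul_mem _ _ (Submodule.subset_span (Set.mem_range_self j))
  have h0 := (Submodule.Quotient.mk_eq_zero _).mpr hmem
  rw [← Submodule.mkQ_apply, map_sub, map_sum, sub_eq_zero] at h0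
  simpa only [map_smul, Submodule.mkQ_apply] using h0

end QuotientLattice

theorem relative_star_subdivision_at_minimal_point_decreases_det_general
    {V : Type u} [AddCommGroup V] [Module ℚ V] (N : Submodule ℤ V)
    {k s : ℕ} (v : Fin k → V) (w : Fin s → V)
    (hrel : RelSimplicial v w)
    (hv : ∀ q, v q ∈ latticeOf N (Fin.append v w))
    (b : Module.Basis (Fin k) ℤ
      (↥(latticeOf N (Fin.append v w)) ⧸
        Submodule.comap (latticeOf N (Fin.append v w)).subtype (latticeOf N w)))
    (x : V)
    (a : Fin k → ℚ) (c : Fin s → ℚ)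
    (ha1 : ∀ i, a i < 1)
    (hx : x = (∑ i, a i • v i) + ∑ j, c j • w j)
    (i : Fin k) (hai : 0 < a i)
    (hmem : ∀ q, Function.update v i x q ∈ latticeOf N (Fin.append v w)) :
    (((Matrix.of fun p q =>
          b.repr (Submodule.Quotient.mk ⟨Function.update v i x q, hmem q⟩) p).det.natAbs : ℚ)
        = a i * (((Matrix.of fun p q =>
            b.repr (Submodule.Quotient.mk ⟨v q, hv q⟩) p).det.natAbs : ℚ)))
      ∧ (Matrix.of fun p q =>
            b.repr (Submodule.Quotient.mk ⟨Function.update v i x q, hmem q⟩) p).det.natAbs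
          < (Matrix.of fun p q =>
            b.repr (Submodule.Quotient.mk ⟨v q, hv q⟩) p).det.natAbs := by
  classical
  have hxL : x ∈ latticeOf N (Fin.append v w) := by simpa using hmem i
  set y := fun q => (Submodule.Quotient.mk ⟨v q, hv q⟩ :
    latticeOf N (Fin.append v w) ⧸ (latticeOf N w).comap (latticeOf N (Fin.append v w)).subtype)
  have hupdate : (fun q => Submodule.Quotient.mk ⟨update v i x q, hmem q⟩) =
      update y i (Submodule.Quotient.mk ⟨x, hxL⟩) := by
    funext q
    rcases eq_or_ne q i with rfl | hq <;> simp [y, *]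
  obtain ⟨d, n, hd, hn, hdx⟩ := exists_smul_mk_eq_sum_smul_mk inf_le_left hv hxL a c hx
  have hdet := b.mul_det_update_of_smul_eq_sum y i hdx
  have hy := b.det_ne_zero_of_linearIndependent (hrel.linearIndependent_mk hv)
  change ((b.det _).natAbs : ℚ) = a i * (b.det y).natAbs ∧ (b.det _).natAbs < (b.det y).natAbs
  rw [hupdate]
  refine natAbs_eq_mul_and_lt_of_cast_eq_mul ?_ hai.le (ha1 i) hy
  refine mul_left_cancel₀ (Int.cast_ne_zero.mpr hd : (d : ℚ) ≠ 0) ?_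
  rw [← mul_assoc, ← hn]
  exact_mod_cast hdet

/-- Let `x = ∑ aᵢ • vᵢ + ∑ cⱼ • wⱼ` (with `0 ≤ aᵢ < 1`, `cⱼ ≥ 0`) be a
minimal vector of a relatively simplicial pair `(σ, ω)`, where
`σ = ⟨v₁,…,v_k, w₁,…,w_s⟩` and `ω = ⟨w₁,…,w_s⟩` is a face of `σ`. For every `i` with
`aᵢ > 0`, the pair `(σᵢ, ω)`, where `σᵢ` is obtained by replacing `vᵢ` with `x`, satisfies
`det(σᵢ,ω) = aᵢ · det(σ,ω)`; in particular `det(σᵢ,ω) < det(σ,ω)`. -/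
theorem relative_star_subdivision_at_minimal_point_decreases_det
    {V : Type u} [AddCommGroup V] [Module ℚ V] (N : Submodule ℤ V) [Module.Finite ℤ ↥N]
    {k s : ℕ} (v : Fin k → V) (w : Fin s → V)
    (hsc : StrictlyConvexCone (Fin.append v w))
    (hface : IsFaceOf (coneSpan (Fin.append v w)) (coneSpan w))
    (hrel : RelSimplicial v w)
    (hprim : ∀ idx, IsPrimitive N (Fin.append v w idx))
    (hv : ∀ q, v q ∈ latticeOf N (Fin.append v w))
    (b : Module.Basis (Fin k) ℤ
      (↥(latticeOf N (Fin.append v w)) ⧸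
        Submodule.comap (latticeOf N (Fin.append v w)).subtype (latticeOf N w)))
    (x : V) (hmin : IsMinimalVec N (Fin.append v w) x) (hnot : x ∉ coneSpan w)
    (a : Fin k → ℚ) (c : Fin s → ℚ)
    (ha0 : ∀ i, 0 ≤ a i) (ha1 : ∀ i, a i < 1) (hc : ∀ j, 0 ≤ c j)
    (hx : x = (∑ i, a i • v i) + ∑ j, c j • w j)
    (i : Fin k) (hai : 0 < a i)
    (hmem : ∀ q, Function.update v i x q ∈ latticeOf N (Fin.append v w)) :
    (((Matrix.of fun p q =>
          b.repr (Submodule.Quotient.mk ⟨Function.update v i x q, hmem q⟩) p).det.natAbs : ℚ)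
        = a i * (((Matrix.of fun p q =>
            b.repr (Submodule.Quotient.mk ⟨v q, hv q⟩) p).det.natAbs : ℚ)))
      ∧ (Matrix.of fun p q =>
            b.repr (Submodule.Quotient.mk ⟨Function.update v i x q, hmem q⟩) p).det.natAbs
          < (Matrix.of fun p q =>
            b.repr (Submodule.Quotient.mk ⟨v q, hv q⟩) p).det.natAbs :=
  relative_star_subdivision_at_minimal_point_decreases_det_general N v w hrel hv b x a c ha1 hx i
    hai hmem
end

section
/- For all positive integers a and b, the vector (1,0,1) does not belong to the subgroup of ℤ³ generated by (2,0,0), (0,2,0), (1,1,0) and (a,a,2b). Consequently these four vectors do not generate the lattice N = {x ∈ ℤ³ : x₁ + x₂ + x₃ ∈ 2ℤ}, even though (1,0,1) ∈ N. (This is the obstruction showing that the ℤ/2-equivariant relative desingularization of the pair (σ,ω) in the obstruction example does not exist: any ℤ/2-invariant vector has the form (a,a,2b), and the cone ⟨(2,0,0),(0,2,0),(a,a,2b)⟩ is never regular relative to ω = ⟨(2,0,0),(0,2,0)⟩.) -/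
theorem dvd_apply_of_mem_span {R ι : Type*} [CommSemiring R] {S : Set (ι → R)} {d : R} {i : ι}
    (hS : ∀ v ∈ S, d ∣ v i) {x : ι → R} (hx : x ∈ Submodule.span R S) : d ∣ x i := by
  have hle : Submodule.span R S ≤ Submodule.comap (LinearMap.proj i) (Ideal.span {d}) :=
    Submodule.span_le.mpr fun v hv => Ideal.mem_span_singleton.mpr (hS v hv)
  exact Ideal.mem_span_singleton.mp (hle hx)

theorem obstruction_vector_not_in_span_general (a b : ℤ) :
    ![1, 0, 1] ∉ Submodule.span ℤ
        ({![2,0,0], ![0,2,0], ![1,1,0], ![a, a, 2*b]} : Set (Fin 3 → ℤ))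
    ∧ (2 : ℤ) ∣ (![1, 0, 1] 0 + ![1, 0, 1] 1 + ![1, 0, 1] 2)
    ∧ ¬ ∀ x : Fin 3 → ℤ, (2 : ℤ) ∣ (x 0 + x 1 + x 2) →
        x ∈ Submodule.span ℤ
          ({![2,0,0], ![0,2,0], ![1,1,0], ![a, a, 2*b]} : Set (Fin 3 → ℤ)) := by
  have hnot : ![1, 0, 1] ∉ Submodule.span ℤ
      ({![2,0,0], ![0,2,0], ![1,1,0], ![a, a, 2*b]} : Set (Fin 3 → ℤ)) := fun h => by
    -- every generator has even third coordinate, `(1,0,1)` does not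
    have h2 := dvd_apply_of_mem_span (d := 2) (i := 2)
      (by rintro v (rfl | rfl | rfl | rfl) <;> simp) h
    norm_num [Matrix.cons_val_two] at h2
  have hN : (2 : ℤ) ∣ (![1, 0, 1] 0 + ![1, 0, 1] 1 + ![1, 0, 1] 2) := by
    norm_num [Matrix.cons_val_two]
  exact ⟨hnot, hN, fun h => hnot (h _ hN)⟩

/-- **obstruction to equivariant relative desingularization.** For all
positive integers `a`, `b`, the vector `(1,0,1)` does not lie in the subgroup of `ℤ³`
generated by `(2,0,0)`, `(0,2,0)`, `(1,1,0)` and `(a,a,2b)`; consequently these four vectors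
do not generate the lattice `N = {x ∈ ℤ³ : x₁ + x₂ + x₃ ∈ 2ℤ}`, even though
`(1,0,1) ∈ N`. -/
theorem obstruction_vector_not_in_span (a b : ℤ) (ha : 0 < a) (hb : 0 < b) :
    ![1, 0, 1] ∉ Submodule.span ℤ
        ({![2,0,0], ![0,2,0], ![1,1,0], ![a, a, 2*b]} : Set (Fin 3 → ℤ))
    ∧ (2 : ℤ) ∣ (![1, 0, 1] 0 + ![1, 0, 1] 1 + ![1, 0, 1] 2)
    ∧ ¬ ∀ x : Fin 3 → ℤ, (2 : ℤ) ∣ (x 0 + x 1 + x 2) →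
        x ∈ Submodule.span ℤ
          ({![2,0,0], ![0,2,0], ![1,1,0], ![a, a, 2*b]} : Set (Fin 3 → ℤ)) :=
  obstruction_vector_not_in_span_general a b
end

section
/- Let K be a perfect field of characteristic p > 0 and let f = X^p − Y^p·Z in the polynomial ring K[X,Y,Z,W]. Then for every point q = (q₁,q₂,q₃,q₄) ∈ K⁴, the polynomial f lies in the p-th power m_q^p of the maximal ideal m_q = (X−q₁, Y−q₂, Z−q₃, W−q₄) if and only if q₁ = 0 and q₂ = 0. (That is, the locus Sing_p of points of order p of the hypersurface x^p = y^p z is exactly the plane V(x,y).) -/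
/-!
If `f ∈ m_q ^ p` then, as `p ≥ 2`, both `f` and its partial derivatives vanish at `q`.
Since `∂f/∂Z = -Y^p`, this forces `q₂ = 0`, and then `f(q) = q₁^p = 0` forces `q₁ = 0`.
Conversely, when `q₁ = q₂ = 0` both `X` and `Y` lie in `m_q`, so `X^p` and `Y^p Z`
lie in `m_q ^ p`.
-/

open MvPolynomial

namespace MvPolynomial

variable {σ R : Type*} [CommRing R] (q : σ → R)

noncomputable def idealOfPoint : Ideal (MvPolynomial σ R) :=
  Ideal.span (Set.range fun i => X i - C (q i))

theorem X_sub_C_mem_idealOfPoint (i : σ) : X i - C (q i) ∈ idealOfPoint q :=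
  Ideal.subset_span ⟨i, rfl⟩

theorem X_mem_idealOfPoint {q : σ → R} {i : σ} (hi : q i = 0) : X i ∈ idealOfPoint q := by
  simpa [hi] using X_sub_C_mem_idealOfPoint q i

theorem idealOfPoint_le_ker_eval : idealOfPoint q ≤ RingHom.ker (eval q) := by
  rw [idealOfPoint, Ideal.span_le]
  rintro _ ⟨i, rfl⟩
  simp

theorem eval_eq_zero_of_mem_idealOfPoint {q : σ → R} {g : MvPolynomial σ R}
    (hg : g ∈ idealOfPoint q) : eval q g = 0 :=
  idealOfPoint_le_ker_eval q hg

theorem eval_pderiv_eq_zero_of_mem_idealOfPoint_sq {q : σ → R} {g : MvPolynomial σ R}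
    (hg : g ∈ idealOfPoint q ^ 2) (i : σ) : eval q (pderiv i g) = 0 := by
  rw [pow_two] at hg
  refine Submodule.mul_induction_on hg (fun a ha b hb => ?_) (fun x y hx hy => ?_)
  · simp [eval_eq_zero_of_mem_idealOfPoint ha, eval_eq_zero_of_mem_idealOfPoint hb]
  · simp [hx, hy]

end MvPolynomial

theorem pinch_point_order_p_locus_general (K : Type*) [Field K] (p : ℕ) (hp : p.Prime)
    (q : Fin 4 → K) :
    (MvPolynomial.X 0 ^ p - MvPolynomial.X 1 ^ p * MvPolynomial.X 2 :
        MvPolynomial (Fin 4) K) ∈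
      (Ideal.span (Set.range fun i : Fin 4 =>
        MvPolynomial.X i - MvPolynomial.C (q i))) ^ p
    ↔ q 0 = 0 ∧ q 1 = 0 := by
  change _ ∈ idealOfPoint q ^ p ↔ _
  constructor
  · intro hf
    have hq1 : q 1 ^ p = 0 := by
      have := eval_pderiv_eq_zero_of_mem_idealOfPoint_sq (Ideal.pow_le_pow_right hp.two_le hf) 2
      simpa [pderiv_pow] using this
    have hq0 : q 0 ^ p = 0 := by
      have := eval_eq_zero_of_mem_idealOfPoint (Ideal.pow_le_self hp.ne_zero hf)
      simpa [hq1] using this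
    exact ⟨pow_eq_zero_iff hp.ne_zero |>.mp hq0, pow_eq_zero_iff hp.ne_zero |>.mp hq1⟩
  · rintro ⟨hq0, hq1⟩
    exact sub_mem (Ideal.pow_mem_pow (X_mem_idealOfPoint hq0) p)
      (Ideal.mul_mem_right _ _ (Ideal.pow_mem_pow (X_mem_idealOfPoint hq1) p))

/-- Over a perfect field `K` of characteristic `p > 0`, the polynomial
`f = X^p − Y^p·Z ∈ K[X,Y,Z,W]` lies in the `p`-th power of the maximal ideal
`m_q = (X−q₁, Y−q₂, Z−q₃, W−q₄)` of a point `q ∈ K⁴` if and only if `q₁ = 0` and `q₂ = 0`: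
the order-`p` locus of the hypersurface `x^p = y^p z` is exactly the plane `V(x,y)`. -/
theorem pinch_point_order_p_locus (K : Type*) [Field K] (p : ℕ) (hp : p.Prime)
    [CharP K p] [PerfectField K] (q : Fin 4 → K) :
    (MvPolynomial.X 0 ^ p - MvPolynomial.X 1 ^ p * MvPolynomial.X 2 :
        MvPolynomial (Fin 4) K) ∈
      (Ideal.span (Set.range fun i : Fin 4 =>
        MvPolynomial.X i - MvPolynomial.C (q i))) ^ p
    ↔ q 0 = 0 ∧ q 1 = 0 :=
  pinch_point_order_p_locus_general K p hp q
end
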